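/- arXiv:2512.11233 — 8 statements merged into one kernel-verified Lean document; each statement's English description precedes it below -/
import Mathlib

section
/- For the binary joint distribution p(a,b,λ) with entries p_{00} = (1+a+b+λ)/4, p_{01} = (1+a−b−λ)/4, p_{10} = (1−a+b−λ)/4, p_{11} = (1−a−b+λ)/4 (all nonnegative), the guessing probability P_{X|Y} := Σ_y max_x p_{X=x,Y=y} equals (1 + max(|a|,|λ|))/2. In particular it is independent of b. -/
/-! Writing `max x y = (x + y + |x - y|) / 2` for each column `Y = y`, the column sums
`(1 + b) / 2` and `(1 - b) / 2` add up to `1`, so `b` drops out, and the remaining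
`(|a + λ| + |a - λ|) / 4` equals `max |a| |λ| / 2`. -/

noncomputable section

def p00 (a b lam : ℝ) : ℝ := (1 + a + b + lam) / 4
def p01 (a b lam : ℝ) : ℝ := (1 + a - b - lam) / 4
def p10 (a b lam : ℝ) : ℝ := (1 - a + b - lam) / 4
def p11 (a b lam : ℝ) : ℝ := (1 - a - b + lam) / 4

section

variable {α : Type*} [Field α] [LinearOrder α] [IsStrictOrderedRing α]

theorem max_eq_add_add_abs_sub_div_two (x y : α) : max x y = (x + y + |x - y|) / 2 := by
  rcases le_total x y with h | h
  · rw [max_eq_right h, abs_of_nonpos (sub_nonpos.mpr h)]; ring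
  · rw [max_eq_left h, abs_of_nonneg (sub_nonneg.mpr h)]; ring

theorem abs_add_add_abs_sub_eq_two_mul_max_abs (x y : α) :
    |x + y| + |x - y| = 2 * max |x| |y| := by
  wlog h : |y| ≤ |x| generalizing x y
  · rw [max_comm, ← this y x (le_of_not_ge h), add_comm y, abs_sub_comm]
  rw [max_eq_left h]
  obtain ⟨hyx, hxy⟩ := abs_le.mp h
  rcases le_total 0 x with hx | hx
  · rw [abs_of_nonneg hx] at hyx hxy ⊢
    rw [abs_of_nonneg (by linarith), abs_of_nonneg (by linarith)]; ring
  · rw [abs_of_nonpos hx] at hyx hxy ⊢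
    rw [abs_of_nonpos (by linarith), abs_of_nonpos (by linarith)]; ring

end

theorem guessing_probability_formula_general (a b lam : ℝ) :
    max (p00 a b lam) (p10 a b lam) + max (p01 a b lam) (p11 a b lam)
      = (1 + max |a| |lam|) / 2 := by
  have hdiff₀ : p00 a b lam - p10 a b lam = (a + lam) / 2 := by unfold p00 p10; ring
  have hdiff₁ : p01 a b lam - p11 a b lam = (a - lam) / 2 := by unfold p01 p11; ring
  have htotal : p00 a b lam + p10 a b lam + (p01 a b lam + p11 a b lam) = 1 := by
    unfold p00 p01 p10 p11; ring
  rw [max_eq_add_add_abs_sub_div_two, max_eq_add_add_abs_sub_div_two, hdiff₀, hdiff₁,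
    abs_div, abs_div, abs_two]
  linarith [abs_add_add_abs_sub_eq_two_mul_max_abs a lam]

theorem guessing_probability_formula (a b lam : ℝ)
    (h00 : 0 ≤ p00 a b lam) (h01 : 0 ≤ p01 a b lam)
    (h10 : 0 ≤ p10 a b lam) (h11 : 0 ≤ p11 a b lam) :
    max (p00 a b lam) (p10 a b lam) + max (p01 a b lam) (p11 a b lam)
      = (1 + max |a| |lam|) / 2 :=
  guessing_probability_formula_general a b lam
end
end

section
/- For the binary joint distribution p(a,b,λ) (with all entries strictly positive), the mutual information I(X:Y) = Σ_{x,y} p_{xy} log(p_{xy}/(p_{X=x} p_{Y=y})) is a convex function of λ on the interior of its domain, for fixed a and b: its second derivative with respect to λ equals (1/16)·Σ_{x,y} 1/p_{xy} ≥ 0. -/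
noncomputable section

def pX0 (a : ℝ) : ℝ := (1 + a) / 2
def pX1 (a : ℝ) : ℝ := (1 - a) / 2
def pY0 (b : ℝ) : ℝ := (1 + b) / 2
def pY1 (b : ℝ) : ℝ := (1 - b) / 2

/-- Mutual information of the binary joint distribution `p(a,b,λ)` (natural log). -/
def MI (a b lam : ℝ) : ℝ :=
    p00 a b lam * Real.log (p00 a b lam / (pX0 a * pY0 b))
  + p01 a b lam * Real.log (p01 a b lam / (pX0 a * pY1 b))
  + p10 a b lam * Real.log (p10 a b lam / (pX1 a * pY0 b))
  + p11 a b lam * Real.log (p11 a b lam / (pX1 a * pY1 b))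

/-!
Each of the four cells moves affinely in `λ` with slope `c = ±1/4`, while the marginals do not
depend on `λ`. A summand `p log (p / m)` with `p` affine of slope `c` and `m` constant has first
derivative `c (log (p / m) + 1)` and second derivative `c² / p`, so the second derivative of the
mutual information is `(1/16) Σ 1 / p_{xy}`, which is positive.
-/

open Real Filter Topology

section CellTerm

variable {p : ℝ → ℝ} {c m t : ℝ}

theorem hasDerivAt_mul_log_div (hp : HasDerivAt p c t) (hpt : p t ≠ 0) (hm : m ≠ 0) :
    HasDerivAt (fun s => p s * log (p s / m)) (c * (log (p t / m) + 1)) t := by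
  refine (hp.mul ((hp.div_const m).log (div_ne_zero hpt hm))).congr_deriv ?_
  field_simp

theorem hasDerivAt_const_mul_log_div_add_one (hp : HasDerivAt p c t) (hpt : p t ≠ 0)
    (hm : m ≠ 0) :
    HasDerivAt (fun s => c * (log (p s / m) + 1)) (c ^ 2 / p t) t := by
  refine ((((hp.div_const m).log (div_ne_zero hpt hm)).add_const 1).const_mul c).congr_deriv ?_
  field_simp

end CellTerm

theorem deriv_deriv_eq_of_eventually_hasDerivAt {f f' : ℝ → ℝ} {t y : ℝ}
    (hf : ∀ᶠ s in 𝓝 t, HasDerivAt f (f' s) s) (hf' : HasDerivAt f' y t) :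
    deriv (deriv f) t = y := by
  rw [Filter.EventuallyEq.deriv_eq (hf.mono fun _ hs => hs.deriv), hf'.deriv]

theorem hasDerivAt_p00 (a b t : ℝ) : HasDerivAt (p00 a b) (1 / 4) t :=
  ((hasDerivAt_id t).const_add (1 + a + b)).div_const 4

theorem hasDerivAt_p01 (a b t : ℝ) : HasDerivAt (p01 a b) (-(1 / 4)) t :=
  (((hasDerivAt_id t).const_sub (1 + a - b)).div_const 4).congr_deriv (neg_div _ _)

theorem hasDerivAt_p10 (a b t : ℝ) : HasDerivAt (p10 a b) (-(1 / 4)) t :=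
  (((hasDerivAt_id t).const_sub (1 - a + b)).div_const 4).congr_deriv (neg_div _ _)

theorem hasDerivAt_p11 (a b t : ℝ) : HasDerivAt (p11 a b) (1 / 4) t :=
  ((hasDerivAt_id t).const_add (1 - a - b)).div_const 4

theorem pX0_eq_add (a b t : ℝ) : pX0 a = p00 a b t + p01 a b t := by
  unfold pX0 p00 p01; ring

theorem pX1_eq_add (a b t : ℝ) : pX1 a = p10 a b t + p11 a b t := by
  unfold pX1 p10 p11; ring

theorem pY0_eq_add (a b t : ℝ) : pY0 b = p00 a b t + p10 a b t := by
  unfold pY0 p00 p10; ring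

theorem pY1_eq_add (a b t : ℝ) : pY1 b = p01 a b t + p11 a b t := by
  unfold pY1 p01 p11; ring

theorem marginal_products_ne_zero {a b t : ℝ} (h00 : 0 < p00 a b t) (h01 : 0 < p01 a b t)
    (h10 : 0 < p10 a b t) (h11 : 0 < p11 a b t) :
    pX0 a * pY0 b ≠ 0 ∧ pX0 a * pY1 b ≠ 0 ∧ pX1 a * pY0 b ≠ 0 ∧ pX1 a * pY1 b ≠ 0 := by
  have hX0 : 0 < pX0 a := pX0_eq_add a b t ▸ add_pos h00 h01
  have hX1 : 0 < pX1 a := pX1_eq_add a b t ▸ add_pos h10 h11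
  have hY0 : 0 < pY0 b := pY0_eq_add a b t ▸ add_pos h00 h10
  have hY1 : 0 < pY1 b := pY1_eq_add a b t ▸ add_pos h01 h11
  exact ⟨(mul_pos hX0 hY0).ne', (mul_pos hX0 hY1).ne', (mul_pos hX1 hY0).ne',
    (mul_pos hX1 hY1).ne'⟩

def MIDeriv (a b t : ℝ) : ℝ :=
    1 / 4 * (log (p00 a b t / (pX0 a * pY0 b)) + 1)
  + -(1 / 4) * (log (p01 a b t / (pX0 a * pY1 b)) + 1)
  + -(1 / 4) * (log (p10 a b t / (pX1 a * pY0 b)) + 1)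
  + 1 / 4 * (log (p11 a b t / (pX1 a * pY1 b)) + 1)

theorem hasDerivAt_MI {a b t : ℝ} (h00 : 0 < p00 a b t) (h01 : 0 < p01 a b t)
    (h10 : 0 < p10 a b t) (h11 : 0 < p11 a b t) :
    HasDerivAt (MI a b) (MIDeriv a b t) t := by
  obtain ⟨m00, m01, m10, m11⟩ := marginal_products_ne_zero h00 h01 h10 h11
  exact (((hasDerivAt_mul_log_div (hasDerivAt_p00 a b t) h00.ne' m00).add
    (hasDerivAt_mul_log_div (hasDerivAt_p01 a b t) h01.ne' m01)).add
    (hasDerivAt_mul_log_div (hasDerivAt_p10 a b t) h10.ne' m10)).add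
    (hasDerivAt_mul_log_div (hasDerivAt_p11 a b t) h11.ne' m11)

theorem hasDerivAt_MIDeriv {a b t : ℝ} (h00 : 0 < p00 a b t) (h01 : 0 < p01 a b t)
    (h10 : 0 < p10 a b t) (h11 : 0 < p11 a b t) :
    HasDerivAt (MIDeriv a b)
      (1 / 16 * (1 / p00 a b t + 1 / p01 a b t + 1 / p10 a b t + 1 / p11 a b t)) t := by
  obtain ⟨m00, m01, m10, m11⟩ := marginal_products_ne_zero h00 h01 h10 h11
  refine ((((hasDerivAt_const_mul_log_div_add_one (hasDerivAt_p00 a b t) h00.ne' m00).add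
    (hasDerivAt_const_mul_log_div_add_one (hasDerivAt_p01 a b t) h01.ne' m01)).add
    (hasDerivAt_const_mul_log_div_add_one (hasDerivAt_p10 a b t) h10.ne' m10)).add
    (hasDerivAt_const_mul_log_div_add_one (hasDerivAt_p11 a b t) h11.ne' m11)).congr_deriv ?_
  ring

theorem MI_second_deriv_lambda (a b lam : ℝ)
    (h00 : 0 < p00 a b lam) (h01 : 0 < p01 a b lam)
    (h10 : 0 < p10 a b lam) (h11 : 0 < p11 a b lam) :
    deriv (deriv (fun t => MI a b t)) lam
      = (1 / 16) * (1 / p00 a b lam + 1 / p01 a b lam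
        + 1 / p10 a b lam + 1 / p11 a b lam) ∧
    0 ≤ deriv (deriv (fun t => MI a b t)) lam := by
  have hcells : ∀ᶠ s in 𝓝 lam,
      0 < p00 a b s ∧ 0 < p01 a b s ∧ 0 < p10 a b s ∧ 0 < p11 a b s :=
    ((hasDerivAt_p00 a b lam).continuousAt.eventually (eventually_gt_nhds h00)).and <|
    ((hasDerivAt_p01 a b lam).continuousAt.eventually (eventually_gt_nhds h01)).and <|
    ((hasDerivAt_p10 a b lam).continuousAt.eventually (eventually_gt_nhds h10)).and
    ((hasDerivAt_p11 a b lam).continuousAt.eventually (eventually_gt_nhds h11))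
  have hsecond : deriv (deriv (fun t => MI a b t)) lam
      = 1 / 16 * (1 / p00 a b lam + 1 / p01 a b lam + 1 / p10 a b lam + 1 / p11 a b lam) :=
    deriv_deriv_eq_of_eventually_hasDerivAt
      (hcells.mono fun _ ⟨hs00, hs01, hs10, hs11⟩ => hasDerivAt_MI hs00 hs01 hs10 hs11)
      (hasDerivAt_MIDeriv h00 h01 h10 h11)
  exact ⟨hsecond, hsecond ▸ by positivity⟩
end
end

section
/- For 0 ≤ a < 1 and 0 ≤ λ with λ ≤ a, define Δ(a,λ) := I(a, −a+λ+1, λ) − I(a, a+λ−1, λ), where I(a,b,λ) is the mutual information of the distribution p(a,b,λ). Then Δ(a,0) = 0 and ∂Δ/∂λ = (1/2)·log((1−λ²)/((2−a)²−λ²)) ≤ 0; consequently Δ(a,λ) ≤ 0 for all λ in [0,a], i.e., the maximum of I over b on the boundary of the domain is attained at b = λ + a − 1. -/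
noncomputable section

/-- `Δ(a,λ) = I(a, −a+λ+1, λ) − I(a, a+λ−1, λ)` (case `λ ≤ a`). -/
def Delta (a lam : ℝ) : ℝ := MI a (-a + lam + 1) lam - MI a (a + lam - 1) lam

/-! On both boundary lines one cell of the joint distribution vanishes (`p11` on
`b = 1 - a + λ`, `p10` on `b = a + λ - 1`), and `I = H(X) + H(Y) - H(X,Y)` collapses to three
`x log x` terms. Relabelling `Y` maps `(b, λ)` to `(-b, -λ)` and exchanges the two lines, so
`Δ(a, λ) = F(1, λ) - F(2 - a, λ)` with `F(c, t) = φ((c + t)/2) - φ((c - t)/2)`, `φ x = x log x`.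
Since `∂F/∂t = log ((c² - t²)/4) / 2 + 1`, the derivative of `Δ` is the stated logarithm, which is
`≤ 0` because `2 - a ≥ 1`; and `Δ(a, 0) = 0` as `F(c, ·)` is odd. -/

open Real Filter Topology

lemma mul_log_div_mul {x y z : ℝ} (hy : y ≠ 0) (hz : z ≠ 0) :
    x * log (x / (y * z)) = x * log x - x * log y - x * log z := by
  rcases eq_or_ne x 0 with rfl | hx
  · simp
  · rw [log_div hx (mul_ne_zero hy hz), log_mul hy hz]; ring

lemma mul_log_div_mul_self (x y : ℝ) : x * log (x / (y * x)) = -(x * log y) := by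
  rcases eq_or_ne x 0 with rfl | hx
  · simp
  · rw [div_mul_cancel_right₀ hx, log_inv]; ring

lemma mul_log_div_self_mul (x y : ℝ) : x * log (x / (x * y)) = -(x * log y) := by
  rw [mul_comm x y, mul_log_div_mul_self]

theorem MI_neg_neg (a b lam : ℝ) : MI a (-b) (-lam) = MI a b lam := by
  have h00 : p00 a (-b) (-lam) = p01 a b lam := by unfold p00 p01; ring
  have h01 : p01 a (-b) (-lam) = p00 a b lam := by unfold p00 p01; ring
  have h10 : p10 a (-b) (-lam) = p11 a b lam := by unfold p10 p11; ring
  have h11 : p11 a (-b) (-lam) = p10 a b lam := by unfold p10 p11; ring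
  have hY0 : pY0 (-b) = pY1 b := by unfold pY0 pY1; ring
  have hY1 : pY1 (-b) = pY0 b := by unfold pY0 pY1; ring
  simp only [MI, h00, h01, h10, h11, hY0, hY1]
  ring

theorem MI_eq_of_p11_eq_zero {a b lam : ℝ} (h : p11 a b lam = 0) (hX0 : pX0 a ≠ 0)
    (hY0 : pY0 b ≠ 0) :
    MI a b lam = p00 a b lam * log (p00 a b lam) - pX0 a * log (pX0 a) - pY0 b * log (pY0 b) := by
  have h01 : p01 a b lam = pY1 b := by unfold p11 at h; unfold p01 pY1; linarith
  have h10 : p10 a b lam = pX1 a := by unfold p11 at h; unfold p10 pX1; linarith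
  have hX : p00 a b lam + pY1 b = pX0 a := by unfold p00 pY1 pX0 p11 at *; linarith
  have hY : p00 a b lam + pX1 a = pY0 b := by unfold p00 pX1 pY0 p11 at *; linarith
  rw [MI, h01, h10, h, mul_log_div_mul hX0 hY0, mul_log_div_mul_self, mul_log_div_self_mul,
    zero_mul, add_zero]
  linear_combination (-log (pX0 a)) * hX + (-log (pY0 b)) * hY

theorem MI_upper_boundary {a t : ℝ} (ha : a ≠ -1) (ht : t ≠ a - 2) :
    MI a (-a + t + 1) t
      = (1 + t) / 2 * log ((1 + t) / 2) - (1 + a) / 2 * log ((1 + a) / 2)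
        - (2 - a + t) / 2 * log ((2 - a + t) / 2) := by
  have h00 : p00 a (-a + t + 1) t = (1 + t) / 2 := by unfold p00; ring
  have h11 : p11 a (-a + t + 1) t = 0 := by unfold p11; ring
  have hX0 : pX0 a = (1 + a) / 2 := rfl
  have hY0 : pY0 (-a + t + 1) = (2 - a + t) / 2 := by unfold pY0; ring
  rw [MI_eq_of_p11_eq_zero h11, h00, hX0, hY0]
  · rw [hX0]; intro h; apply ha; linarith
  · rw [hY0]; intro h; apply ht; linarith

def mulLogDiff (c t : ℝ) : ℝ :=
  (c + t) / 2 * log ((c + t) / 2) - (c - t) / 2 * log ((c - t) / 2)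

theorem Delta_eq {a lam : ℝ} (ha : a ≠ -1) (hlam : |lam| < 2 - a) :
    Delta a lam = mulLogDiff 1 lam - mulLogDiff (2 - a) lam := by
  obtain ⟨h₁, h₂⟩ := abs_lt.mp hlam
  have hlower : MI a (a + lam - 1) lam = MI a (-a + -lam + 1) (-lam) := by
    rw [← MI_neg_neg a (-a + -lam + 1) (-lam)]
    congr 1 <;> ring
  rw [Delta, hlower, MI_upper_boundary ha (by linarith), MI_upper_boundary ha (by linarith)]
  simp only [mulLogDiff, ← sub_eq_add_neg]
  ring

theorem hasDerivAt_mulLogDiff {c t : ℝ} (h : |t| < c) :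
    HasDerivAt (mulLogDiff c) (log ((c ^ 2 - t ^ 2) / 4) / 2 + 1) t := by
  obtain ⟨h₁, h₂⟩ := abs_lt.mp h
  have hp : (c + t) / 2 ≠ 0 := by apply ne_of_gt; linarith
  have hm : (c - t) / 2 ≠ 0 := by apply ne_of_gt; linarith
  have hplus : HasDerivAt (fun s => (c + s) / 2) (1 / 2) t :=
    ((hasDerivAt_id t).const_add c).div_const 2
  have hminus : HasDerivAt (fun s => (c - s) / 2) (-1 / 2) t :=
    ((hasDerivAt_id t).const_sub c).div_const 2
  refine (((hasDerivAt_mul_log hp).comp t hplus).sub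
    ((hasDerivAt_mul_log hm).comp t hminus)).congr_deriv ?_
  rw [show (c ^ 2 - t ^ 2) / 4 = (c + t) / 2 * ((c - t) / 2) by ring, log_mul hp hm]
  ring

theorem hasDerivAt_Delta {a lam : ℝ} (ha : a ≠ -1) (h₁ : |lam| < 1) (h₂ : |lam| < 2 - a) :
    HasDerivAt (Delta a) ((1 / 2) * log ((1 - lam ^ 2) / ((2 - a) ^ 2 - lam ^ 2))) lam := by
  have heq : Delta a =ᶠ[𝓝 lam] fun t => mulLogDiff 1 t - mulLogDiff (2 - a) t := by
    filter_upwards [(isOpen_lt continuous_abs continuous_const).mem_nhds h₂] with t ht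
    exact Delta_eq ha ht
  refine (((hasDerivAt_mulLogDiff (by simpa using h₁)).sub
    (hasDerivAt_mulLogDiff h₂)).congr_of_eventuallyEq heq).congr_deriv ?_
  have hu : 1 - lam ^ 2 ≠ 0 := by
    have := sq_lt_one_iff_abs_lt_one lam |>.mpr h₁; apply ne_of_gt; linarith
  have hv : (2 - a) ^ 2 - lam ^ 2 ≠ 0 := by
    have := sq_lt_sq' (abs_lt.mp h₂).1 (abs_lt.mp h₂).2; apply ne_of_gt; linarith
  rw [one_pow, log_div hu hv, log_div hu four_ne_zero, log_div hv four_ne_zero]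
  ring

lemma log_div_sub_sq_nonpos {c t : ℝ} (ht : |t| ≤ 1) (hc : 1 ≤ c) :
    log ((1 - t ^ 2) / (c ^ 2 - t ^ 2)) ≤ 0 := by
  have hnum : 0 ≤ 1 - t ^ 2 := by nlinarith [sq_le_one_iff_abs_le_one t |>.mpr ht]
  have hle : 1 - t ^ 2 ≤ c ^ 2 - t ^ 2 := by nlinarith
  exact log_nonpos (div_nonneg hnum (hnum.trans hle)) (div_le_one_of_le₀ hle (hnum.trans hle))

theorem boundary_max_b_case_lam_le_a (a : ℝ) (ha : 0 ≤ a) (ha' : a < 1) :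
    Delta a 0 = 0 ∧
    (∀ lam : ℝ, 0 ≤ lam → lam ≤ a →
      deriv (fun t => Delta a t) lam
        = (1 / 2) * Real.log ((1 - lam ^ 2) / ((2 - a) ^ 2 - lam ^ 2)) ∧
      deriv (fun t => Delta a t) lam ≤ 0) ∧
    (∀ lam : ℝ, 0 ≤ lam → lam ≤ a → Delta a lam ≤ 0) := by
  have ha₁ : a ≠ -1 := by linarith
  have hderiv : ∀ lam, |lam| < 1 →
      HasDerivAt (Delta a) ((1 / 2) * log ((1 - lam ^ 2) / ((2 - a) ^ 2 - lam ^ 2))) lam :=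
    fun lam h => hasDerivAt_Delta ha₁ h (by linarith)
  have hslope : ∀ lam, |lam| < 1 → (1 / 2) * log ((1 - lam ^ 2) / ((2 - a) ^ 2 - lam ^ 2)) ≤ 0 :=
    fun lam h => mul_nonpos_of_nonneg_of_nonpos (by norm_num)
      (log_div_sub_sq_nonpos h.le (by linarith))
  have hsmall : ∀ lam ∈ Set.Icc 0 a, |lam| < 1 :=
    fun lam h => abs_lt.mpr ⟨by linarith [h.1], by linarith [h.2]⟩
  have hzero : Delta a 0 = 0 := by
    rw [Delta_eq ha₁ (by simp; linarith)]
    simp [mulLogDiff]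
  have hanti : AntitoneOn (Delta a) (Set.Icc 0 a) :=
    antitoneOn_of_hasDerivWithinAt_nonpos (convex_Icc 0 a)
      (fun x hx => (hderiv x (hsmall x hx)).continuousAt.continuousWithinAt)
      (fun x hx => (hderiv x (hsmall x (interior_subset hx))).hasDerivWithinAt)
      (fun x hx => hslope x (hsmall x (interior_subset hx)))
  refine ⟨hzero, fun lam h₀ h₁ => ?_, fun lam h₀ h₁ => ?_⟩
  · rw [(hderiv lam (hsmall lam ⟨h₀, h₁⟩)).deriv]
    exact ⟨rfl, hslope lam (hsmall lam ⟨h₀, h₁⟩)⟩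
  · simpa [hzero] using hanti ⟨le_rfl, ha⟩ ⟨h₀, h₁⟩ h₀
end
end

section
/- For 0 < a < 1, define g(λ) := I(a, λ+a−1, λ), the mutual information of the distribution p(a, λ+a−1, λ), for λ in the valid range with 0 ≤ λ < 1. Then g''(λ) = (1−a)/(2(1−λ)(2−a−λ)) ≥ 0, so g is convex in λ. -/
noncomputable section

theorem MI_boundary_convex_in_lambda (a lam : ℝ) (ha : 0 < a) (ha' : a < 1)
    (hl : 0 ≤ lam) (hl' : lam < 1) :
    deriv (deriv (fun t => MI a (t + a - 1) t)) lam
      = (1 - a) / (2 * (1 - lam) * (2 - a - lam)) ∧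
    0 ≤ deriv (deriv (fun t => MI a (t + a - 1) t)) lam := by
  have ha1 : (0:ℝ) < 1 + a := by linarith
  set c : ℝ := Real.log 2 - Real.log (1 + a) with hc
  set G : ℝ → ℝ := fun t => ((a+t)/2)*c
      + ((1-t)/2)*(Real.log (1-t) - Real.log (2-a-t) + c)
      + ((1-a)/2)*(Real.log 2 - Real.log (2-a-t)) with hG
  set D : ℝ → ℝ := fun t => (Real.log (2-a-t) - Real.log (1-t))/2 with hD
  have hopen : IsOpen (Set.Ioo (-a) (1:ℝ)) := isOpen_Ioo
  have hmem : lam ∈ Set.Ioo (-a) (1:ℝ) := ⟨by linarith, hl'⟩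
  -- Step 1: the function agrees with G near lam
  have hEq : (fun t => MI a (t + a - 1) t) =ᶠ[nhds lam] G := by
    filter_upwards [hopen.mem_nhds hmem] with t ht
    obtain ⟨ht1, ht2⟩ := ht
    have hat : (0:ℝ) < a + t := by linarith
    have h1t : (0:ℝ) < 1 - t := by linarith
    have h2at : (0:ℝ) < 2 - a - t := by linarith
    have n1 : (1:ℝ)+a ≠ 0 := ne_of_gt ha1
    have n2 : 1+(t+a-1) ≠ 0 := by intro h; linarith [hat]
    have n3 : (2:ℝ)-a-t ≠ 0 := ne_of_gt h2at
    have n4 : 1-(t+a-1) ≠ 0 := by intro h; linarith [h2at]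
    have n5 : (1:ℝ)-a ≠ 0 := by intro h; linarith
    have n6 : (1:ℝ)-t ≠ 0 := ne_of_gt h1t
    have hden1 : (1+a)/2 * ((1+(t+a-1))/2) ≠ 0 :=
      ne_of_gt (by nlinarith [mul_pos ha1 hat])
    have hden2 : (1+a)/2 * ((1-(t+a-1))/2) ≠ 0 :=
      ne_of_gt (by nlinarith [mul_pos ha1 h2at])
    have hden4 : (1-a)/2 * ((1-(t+a-1))/2) ≠ 0 :=
      ne_of_gt (by nlinarith [mul_pos (show (0:ℝ) < 1-a by linarith) h2at])
    have hden2' : (2-a-t)*(1+a) ≠ 0 := ne_of_gt (mul_pos h2at ha1)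
    have e1 : p00 a (t+a-1) t / (pX0 a * pY0 (t+a-1)) = 2/(1+a) := by
      simp only [p00, pX0, pY0]
      rw [div_eq_div_iff hden1 n1]
      ring
    have e2 : p01 a (t+a-1) t / (pX0 a * pY1 (t+a-1))
        = ((1-t)/(2-a-t)) * (2/(1+a)) := by
      simp only [p01, pX0, pY1]
      conv_rhs => rw [div_mul_div_comm]
      rw [div_eq_div_iff hden2 hden2']
      ring
    have e3 : p10 a (t+a-1) t = 0 := by simp only [p10]; ring
    have e4 : p11 a (t+a-1) t / (pX1 a * pY1 (t+a-1)) = 2/(2-a-t) := by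
      simp only [p11, pX1, pY1]
      rw [div_eq_div_iff hden4 n3]
      ring
    have c0 : p00 a (t+a-1) t = (a+t)/2 := by simp only [p00]; ring
    have c1 : p01 a (t+a-1) t = (1-t)/2 := by simp only [p01]; ring
    have c4 : p11 a (t+a-1) t = (1-a)/2 := by simp only [p11]; ring
    have l1 : Real.log (2/(1+a)) = c := by
      rw [hc, Real.log_div two_ne_zero (ne_of_gt ha1)]
    have l2 : Real.log (((1-t)/(2-a-t)) * (2/(1+a)))
        = Real.log (1-t) - Real.log (2-a-t) + c := by
      rw [Real.log_mul (by positivity) (by positivity),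
        Real.log_div (ne_of_gt h1t) (ne_of_gt h2at), l1]
    have l4 : Real.log (2/(2-a-t)) = Real.log 2 - Real.log (2-a-t) := by
      rw [Real.log_div two_ne_zero (ne_of_gt h2at)]
    show MI a (t+a-1) t = G t
    rw [MI, e1, e2, e4, e3, c0, c1, c4, l1, l2, l4, hG]
    ring
  -- Step 2: G has derivative D on the open interval
  have hGderiv : ∀ t ∈ Set.Ioo (-a) (1:ℝ), HasDerivAt G (D t) t := by
    intro t ht
    obtain ⟨ht1, ht2⟩ := ht
    have h1t : (0:ℝ) < 1 - t := by linarith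
    have h2at : (0:ℝ) < 2 - a - t := by linarith
    have hlog1 : HasDerivAt (fun t : ℝ => Real.log (1-t)) (1/(1-t)*(-1)) t := by
      have h := (((hasDerivAt_id' t).const_sub 1)).log (ne_of_gt h1t)
      convert h using 1
      field_simp
    have hlog2 : HasDerivAt (fun t : ℝ => Real.log (2-a-t)) (1/(2-a-t)*(-1)) t := by
      have h := (((hasDerivAt_id' t).const_sub (2-a))).log (ne_of_gt h2at)
      convert h using 1
      field_simp
    have hd1 : HasDerivAt (fun t : ℝ => ((a+t)/2)*c) ((1/2)*c) t := by
      have h := (((hasDerivAt_id' t).const_add a).div_const 2).mul_const c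
      convert h using 1
    have hd2 : HasDerivAt (fun t : ℝ => ((1-t)/2)*(Real.log (1-t) - Real.log (2-a-t) + c))
        ((-1/2)*(Real.log (1-t) - Real.log (2-a-t) + c)
          + ((1-t)/2)*(1/(1-t)*(-1) - 1/(2-a-t)*(-1))) t := by
      have hcoef : HasDerivAt (fun t : ℝ => (1-t)/2) (-1/2) t := by
        have h := (((hasDerivAt_id' t).const_sub 1)).div_const 2
        convert h using 1
      exact hcoef.mul ((hlog1.sub hlog2).add_const c)
    have hd3 : HasDerivAt (fun t : ℝ => ((1-a)/2)*(Real.log 2 - Real.log (2-a-t)))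
        (((1-a)/2) * (0 - 1/(2-a-t)*(-1))) t := by
      exact ((hasDerivAt_const t (Real.log 2)).sub hlog2).const_mul ((1-a)/2)
    have htotal := (hd1.add hd2).add hd3
    have : (1/2)*c + ((-1/2)*(Real.log (1-t) - Real.log (2-a-t) + c)
          + ((1-t)/2)*(1/(1-t)*(-1) - 1/(2-a-t)*(-1)))
        + ((1-a)/2) * (0 - 1/(2-a-t)*(-1)) = D t := by
      rw [hD]
      field_simp
      ring
    rw [this] at htotal
    exact htotal
  -- Step 3: deriv D at lam
  have h1l : (0:ℝ) < 1 - lam := by linarith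
  have h2al : (0:ℝ) < 2 - a - lam := by linarith
  have hlog1 : HasDerivAt (fun t : ℝ => Real.log (1-t)) (1/(1-lam)*(-1)) lam := by
    have h := (((hasDerivAt_id' lam).const_sub 1)).log (ne_of_gt h1l)
    convert h using 1
    field_simp
  have hlog2 : HasDerivAt (fun t : ℝ => Real.log (2-a-t)) (1/(2-a-lam)*(-1)) lam := by
    have h := (((hasDerivAt_id' lam).const_sub (2-a))).log (ne_of_gt h2al)
    convert h using 1
    field_simp
  have hDlam : HasDerivAt D ((1 - a) / (2 * (1 - lam) * (2 - a - lam))) lam := by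
    have h := (hlog2.sub hlog1).div_const 2
    have heq : (1/(2-a-lam)*(-1) - 1/(1-lam)*(-1))/2
        = (1 - a) / (2 * (1 - lam) * (2 - a - lam)) := by
      field_simp
      ring
    rw [heq] at h
    exact h
  -- Conclusion
  have hEq2 : deriv (fun t => MI a (t + a - 1) t) =ᶠ[nhds lam] D := by
    refine hEq.deriv.trans ?_
    filter_upwards [hopen.mem_nhds hmem] with t ht
    exact (hGderiv t ht).deriv
  have hkey : deriv (deriv (fun t => MI a (t + a - 1) t)) lam = deriv D lam :=
    hEq2.deriv_eq
  rw [hkey, hDlam.deriv]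
  exact ⟨rfl, le_of_lt (div_pos (by linarith) (by nlinarith [mul_pos h1l h2al]))⟩
end
end

section
/- Let p_{X,Y} and p_{X,Z} be binary joint distributions of the form p_{X,Y} = p(0,b,λ) and p_{X,Z} = p(0,b,μ) (i.e., uniform marginal on X and equal marginals on Y and Z). Then P_{X|Y} ≥ P_{X|Z} implies I(X:Y) ≥ I(X:Z), and P_{X|Y} = P_{X|Z} if and only if I(X:Y) = I(X:Z). -/
noncomputable section

/-- Guessing probability of `p(a,b,λ)` (independent of `b`). -/
def Pg (a lam : ℝ) : ℝ := (1 + max |a| |lam|) / 2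

/-!
For `a = 0` the mutual information equals, up to a term depending only on `b`, the quarter of
`φ(1+b+λ) + φ(1+b-λ) + φ(1-b+λ) + φ(1-b-λ)` with `φ x = x log x`. This is even in `λ`, and
`t ↦ φ(c+t) + φ(c-t)` has derivative `log (c+t) - log (c-t) > 0` on `(0, c)`, so it is strictly
increasing in `|λ|` on the range `|λ| ≤ 1 - |b|` allowed by nonnegativity. The guessing
probability is `(1 + |λ|)/2`, so both quantities are strictly increasing functions of `|λ|`.
-/

open Real Set

def symmMulLog (c t : ℝ) : ℝ := (c + t) * log (c + t) + (c - t) * log (c - t)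

lemma symmMulLog_abs (c t : ℝ) : symmMulLog c |t| = symmMulLog c t := by
  rcases abs_choice t with h | h <;> rw [h]
  simp only [symmMulLog, sub_neg_eq_add, ← sub_eq_add_neg]
  ring

lemma strictMonoOn_symmMulLog (c : ℝ) : StrictMonoOn (symmMulLog c) (Icc 0 c) := by
  apply strictMonoOn_of_deriv_pos (convex_Icc 0 c)
  · exact ((continuous_mul_log.comp (continuous_const_add c)).add
      (continuous_mul_log.comp (continuous_sub_left c))).continuousOn
  · intro t ht
    rw [interior_Icc] at ht
    have hplus : 0 < c + t := by linarith [ht.1, ht.2]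
    have hminus : 0 < c - t := by linarith [ht.2]
    have hp := (hasDerivAt_mul_log hplus.ne').comp t ((hasDerivAt_id t).const_add c)
    have hm := (hasDerivAt_mul_log hminus.ne').comp t ((hasDerivAt_id t).const_sub c)
    have hderiv : HasDerivAt (symmMulLog c)
        ((log (c + t) + 1) * 1 + (log (c - t) + 1) * -1) t := hp.add hm
    rw [hderiv.deriv]
    linarith [log_lt_log hminus (by linarith [ht.1] : c - t < c + t)]

def miUniformX (b lam : ℝ) : ℝ :=
  (symmMulLog (1 + b) lam + symmMulLog (1 - b) lam
    - 2 * ((1 + b) * log (1 + b)) - 2 * ((1 - b) * log (1 - b))) / 4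

lemma strictMonoOn_miUniformX (b : ℝ) : StrictMonoOn (miUniformX b) (Icc 0 (1 - |b|)) := by
  intro s hs t ht hst
  have hplus (x : ℝ) (hx : x ∈ Icc 0 (1 - |b|)) : x ∈ Icc 0 (1 + b) :=
    ⟨hx.1, by linarith [hx.2, neg_abs_le b]⟩
  have hminus (x : ℝ) (hx : x ∈ Icc 0 (1 - |b|)) : x ∈ Icc 0 (1 - b) :=
    ⟨hx.1, by linarith [hx.2, le_abs_self b]⟩
  have h1 := strictMonoOn_symmMulLog (1 + b) (hplus s hs) (hplus t ht) hst
  have h2 := strictMonoOn_symmMulLog (1 - b) (hminus s hs) (hminus t ht) hst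
  simp only [miUniformX]
  linarith

lemma abs_add_abs_le_one {b lam : ℝ}
    (h1 : 0 ≤ p00 0 b lam) (h2 : 0 ≤ p01 0 b lam)
    (h3 : 0 ≤ p10 0 b lam) (h4 : 0 ≤ p11 0 b lam) : |b| + |lam| ≤ 1 := by
  simp only [p00, p01, p10, p11] at h1 h2 h3 h4
  rcases abs_choice b with hb | hb <;> rcases abs_choice lam with hl | hl <;> linarith

lemma div_four_mul_log_div {u v : ℝ} (h : v = 0 → u = 0) :
    u / 4 * log (u / 4 / (v / 4)) = (u * log u - u * log v) / 4 := by
  rcases eq_or_ne u 0 with rfl | hu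
  · simp
  rw [div_div_div_cancel_right₀ four_ne_zero, log_div hu (mt h hu)]
  ring

lemma MI_zero_eq {b lam : ℝ} (h : |b| + |lam| ≤ 1) : MI 0 b lam = miUniformX b |lam| := by
  have hl := abs_le.1 (show |lam| ≤ 1 - |b| by linarith)
  have hb := neg_abs_le b
  have hb' := le_abs_self b
  have e00 : p00 0 b lam = (1 + b + lam) / 4 := by simp only [p00]; ring
  have e01 : p01 0 b lam = (1 - b - lam) / 4 := by simp only [p01]; ring
  have e10 : p10 0 b lam = (1 + b - lam) / 4 := by simp only [p10]; ring
  have e11 : p11 0 b lam = (1 - b + lam) / 4 := by simp only [p11]; ring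
  have f00 : pX0 0 * pY0 b = (1 + b) / 4 := by simp only [pX0, pY0]; ring
  have f01 : pX0 0 * pY1 b = (1 - b) / 4 := by simp only [pX0, pY1]; ring
  have f10 : pX1 0 * pY0 b = (1 + b) / 4 := by simp only [pX1, pY0]; ring
  have f11 : pX1 0 * pY1 b = (1 - b) / 4 := by simp only [pX1, pY1]; ring
  simp only [MI, e00, e01, e10, e11, f00, f01, f10, f11]
  -- a vanishing marginal `1 ± b = 0` forces `λ = 0`, hence the matching entries vanish too
  rw [div_four_mul_log_div (fun _ => by linarith), div_four_mul_log_div (fun _ => by linarith),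
    div_four_mul_log_div (fun _ => by linarith), div_four_mul_log_div (fun _ => by linarith),
    miUniformX, symmMulLog_abs, symmMulLog_abs]
  simp only [symmMulLog]
  ring

lemma Pg_zero (lam : ℝ) : Pg 0 lam = (1 + |lam|) / 2 := by
  simp [Pg]

theorem monotonicity_uniform_x (b lam mu : ℝ)
    (h1 : 0 ≤ p00 0 b lam) (h2 : 0 ≤ p01 0 b lam)
    (h3 : 0 ≤ p10 0 b lam) (h4 : 0 ≤ p11 0 b lam)
    (h1' : 0 ≤ p00 0 b mu) (h2' : 0 ≤ p01 0 b mu)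
    (h3' : 0 ≤ p10 0 b mu) (h4' : 0 ≤ p11 0 b mu) :
    (Pg 0 mu ≤ Pg 0 lam → MI 0 b mu ≤ MI 0 b lam) ∧
    (Pg 0 lam = Pg 0 mu ↔ MI 0 b lam = MI 0 b mu) := by
  have hlam := abs_add_abs_le_one h1 h2 h3 h4
  have hmu := abs_add_abs_le_one h1' h2' h3' h4'
  have hmono := strictMonoOn_miUniformX b
  have mem_lam : |lam| ∈ Icc 0 (1 - |b|) := ⟨abs_nonneg lam, by linarith⟩
  have mem_mu : |mu| ∈ Icc 0 (1 - |b|) := ⟨abs_nonneg mu, by linarith⟩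
  simp only [Pg_zero, MI_zero_eq hlam, MI_zero_eq hmu,
    hmono.le_iff_le mem_mu mem_lam, hmono.injOn.eq_iff mem_lam mem_mu]
  exact ⟨fun h => by linarith, fun h => by linarith, fun h => by linarith⟩
end
end

section
/- Let p_{X,Y} = p(a,0,λ) and p_{X,Z} = p(a,0,μ) be binary joint distributions with uniform Y- and Z-marginals, a ≥ 0, and λ ≥ a (i.e., Tr p_{X,Y} ≥ p_{X=0}), μ ≥ 0. Then P_{X|Y} ≥ P_{X|Z} implies I(X:Y) ≥ I(X:Z). -/
noncomputable section

/-!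
With a uniform second marginal, `MI a 0 t` is, after the rescaling `s = t / 4`, a sum of two
functions `s ↦ h (c + s) + h (c - s)` with `h x = x * log (x / c)` convex. Such a symmetrised
convex function is nondecreasing for `s ≥ 0`, so `MI a 0` is monotone on `[0, 1 - a]`. When
`λ ≥ a ≥ 0` the guessing probability is `(1 + λ) / 2`, so `Pg a μ ≤ Pg a λ` forces `μ ≤ λ`.
-/

open Real Set

theorem ConvexOn.monotoneOn_add_comp_neg {s : Set ℝ} {f : ℝ → ℝ} (hf : ConvexOn ℝ s f)
    {c r : ℝ} (hl : c - r ∈ s) (hr : c + r ∈ s) :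
    MonotoneOn (fun t ↦ f (c + t) + f (c - t)) (Icc 0 r) := by
  rintro t ⟨ht, -⟩ u ⟨-, hur⟩ htu
  obtain rfl | hu := (ht.trans htu).eq_or_lt
  · rw [le_antisymm htu ht]
  have hs := convex_iff_ordConnected.mp hf.1
  have hcu : c + u ∈ s := hs.out hl hr ⟨by linarith, by linarith⟩
  have hcu' : c - u ∈ s := hs.out hl hr ⟨by linarith, by linarith⟩
  -- `c + v` is the convex combination of `c ± u` with weights `(u ± v) / 2u`
  have key (v : ℝ) (hv : -u ≤ v) (hv' : v ≤ u) :
      f (c + v) ≤ ((u + v) * f (c + u) + (u - v) * f (c - u)) / (2 * u) := by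
    have := hf.2 hcu hcu' (div_nonneg (by linarith : 0 ≤ u + v) (by linarith : 0 ≤ 2 * u))
      (div_nonneg (by linarith : 0 ≤ u - v) (by linarith : 0 ≤ 2 * u)) (by field_simp; ring)
    have hv : c + v = (u + v) / (2 * u) * (c + u) + (u - v) / (2 * u) * (c - u) := by
      field_simp; ring
    simp only [smul_eq_mul, ← hv] at this
    exact this.trans_eq (by ring)
  calc f (c + t) + f (c - t)
      ≤ ((u + t) * f (c + u) + (u - t) * f (c - u)) / (2 * u)
        + ((u - t) * f (c + u) + (u + t) * f (c - u)) / (2 * u) := by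
        gcongr
        · exact key t (by linarith) htu
        · simpa [sub_eq_add_neg] using key (-t) (by linarith) (by linarith)
    _ = f (c + u) + f (c - u) := by field_simp; ring

theorem convexOn_mul_log_div {q : ℝ} (hq : q ≠ 0) :
    ConvexOn ℝ (Ici 0) (fun x ↦ x * log (x / q)) := by
  refine (convexOn_mul_log.add
    (((-log q) • LinearMap.id : ℝ →ₗ[ℝ] ℝ).convexOn (convex_Ici 0))).congr ?_
  intro x hx
  rcases eq_or_ne x 0 with rfl | hx0
  · simp
  · simp only [Pi.add_apply, LinearMap.smul_apply, LinearMap.id_apply, smul_eq_mul,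
      log_div hx0 hq]
    ring

def symmMulLogDiv (c s : ℝ) : ℝ := (c + s) * log ((c + s) / c) + (c - s) * log ((c - s) / c)

theorem monotoneOn_symmMulLogDiv {c : ℝ} (hc : 0 ≤ c) :
    MonotoneOn (symmMulLogDiv c) (Icc 0 c) := by
  obtain rfl | hc := hc.eq_or_lt
  · simp
  exact (convexOn_mul_log_div hc.ne').monotoneOn_add_comp_neg (by simp) (mem_Ici.mpr (by linarith))

theorem MI_zero_eq_s10 (a t : ℝ) :
    MI a 0 t = symmMulLogDiv ((1 + a) / 4) (t / 4) + symmMulLogDiv ((1 - a) / 4) (t / 4) := by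
  simp only [MI, symmMulLogDiv, p00, p01, p10, p11, pX0, pX1, pY0, pY1]
  ring_nf

theorem monotoneOn_MI_zero {a : ℝ} (ha : 0 ≤ a) (ha1 : a ≤ 1) :
    MonotoneOn (MI a 0) (Icc 0 (1 - a)) := by
  have hdiv : MapsTo (· / 4) (Icc 0 (1 - a)) (Icc 0 ((1 - a) / 4)) :=
    fun t ht ↦ ⟨by linarith [ht.1], by linarith [ht.2]⟩
  intro t ht u hu htu
  rw [MI_zero_eq_s10, MI_zero_eq_s10]
  gcongr ?_ + ?_
  · exact (monotoneOn_symmMulLogDiv (by linarith)).mono (Icc_subset_Icc_right (by linarith))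
      (hdiv ht) (hdiv hu) (by linarith)
  · exact monotoneOn_symmMulLogDiv (by linarith) (hdiv ht) (hdiv hu) (by linarith)

theorem abs_le_of_Pg_le {a lam mu : ℝ} (hla : |a| ≤ lam) (h : Pg a mu ≤ Pg a lam) :
    |mu| ≤ lam := by
  have hmax : max |a| |lam| = lam := by
    rw [abs_of_nonneg ((abs_nonneg a).trans hla), max_eq_right hla]
  unfold Pg at h
  linarith [le_max_right |a| |mu|]

theorem monotonicity_uniform_yz_general (a lam mu : ℝ) (ha : 0 ≤ a) (hla : a ≤ lam)
    (hmu : 0 ≤ mu)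
    (h3 : 0 ≤ p10 a 0 lam)
    (h3' : 0 ≤ p10 a 0 mu) :
    Pg a mu ≤ Pg a lam → MI a 0 mu ≤ MI a 0 lam := by
  intro hPg
  have hlam : lam ≤ 1 - a := by unfold p10 at h3; linarith
  have hmu' : mu ≤ 1 - a := by unfold p10 at h3'; linarith
  have hle : mu ≤ lam :=
    (le_abs_self mu).trans (abs_le_of_Pg_le (by rwa [abs_of_nonneg ha]) hPg)
  exact monotoneOn_MI_zero ha (by linarith) ⟨hmu, hmu'⟩ ⟨ha.trans hla, hlam⟩ hle

theorem monotonicity_uniform_yz (a lam mu : ℝ) (ha : 0 ≤ a) (hla : a ≤ lam)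
    (hmu : 0 ≤ mu)
    (h1 : 0 ≤ p00 a 0 lam) (h2 : 0 ≤ p01 a 0 lam)
    (h3 : 0 ≤ p10 a 0 lam) (h4 : 0 ≤ p11 a 0 lam)
    (h1' : 0 ≤ p00 a 0 mu) (h2' : 0 ≤ p01 a 0 mu)
    (h3' : 0 ≤ p10 a 0 mu) (h4' : 0 ≤ p11 a 0 mu) :
    Pg a mu ≤ Pg a lam → MI a 0 mu ≤ MI a 0 lam :=
  monotonicity_uniform_yz_general a lam mu ha hla hmu h3 h3'
end
end

section
/- Let ρ ≠ σ be 2×2 density matrices and H(λ) = λ(μρ + (1−μ)σ) − (ρ−σ) with μ = (Tr σ² − Tr ρσ)/Tr(ρ−σ)². Then det H(λ) = 0 if and only if λ = ±λ*, where λ* = Tr(ρ−σ)² / sqrt(Tr(ρ−σ)² − Tr ρ²·Tr σ² + (Tr ρσ)²), and the quantity under the square root is strictly positive. -/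
open Matrix
open scoped ComplexOrder

noncomputable section

/-- A density matrix: positive semidefinite with unit trace. -/
def IsDensity {d : ℕ} (rho : Matrix (Fin d) (Fin d) ℂ) : Prop :=
  rho.PosSemidef ∧ rho.trace = 1

/-- The coefficient `μ = (Tr σ² − Tr ρσ)/Tr(ρ−σ)²`. -/
def muCoef {d : ℕ} (rho sigma : Matrix (Fin d) (Fin d) ℂ) : ℂ :=
  ((sigma * sigma).trace - (rho * sigma).trace) / (((rho - sigma) * (rho - sigma)).trace)

/-- The affine combination `ω = μρ + (1−μ)σ`. -/
def omegaOp {d : ℕ} (rho sigma : Matrix (Fin d) (Fin d) ℂ) : Matrix (Fin d) (Fin d) ℂ :=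
  muCoef rho sigma • rho + (1 - muCoef rho sigma) • sigma

/-- The family `H(λ) = λω − (ρ−σ)`. -/
def Hmat (rho sigma : Matrix (Fin 2) (Fin 2) ℂ) (lam : ℝ) : Matrix (Fin 2) (Fin 2) ℂ :=
  (lam : ℂ) • omegaOp rho sigma - (rho - sigma)

/-! For a 2×2 matrix, `2 det H = (Tr H)² − Tr H²`. With `Δ = ρ − σ` and `T = Tr Δ²`, the choice
of `μ` makes `ω = σ + μΔ` a trace-one matrix Hilbert–Schmidt orthogonal to `Δ`, so `Tr H(λ) = λ`,
`Tr H(λ)² = λ² Tr ω² + T`, and `T · Tr ω² = Tr ρ² Tr σ² − (Tr ρσ)²`. Hence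
`2T det H(λ) = λ² (T − Tr ρ² Tr σ² + (Tr ρσ)²) − T²`, whose zeros are `±T / √(⋯)`.

For positivity, `T > 0` because `Δ` is a nonzero Hermitian matrix, and `Tr ρ², Tr σ² ≤ 1` because
`1 − Tr ρ² = 2 det ρ ≥ 0`. With `x = 1 − Tr ρ²`, `y = 1 − Tr σ²` and `T = Tr ρ² + Tr σ² − 2 Tr ρσ`,
the quantity under the root is `((x + y + T)² − 4xy) / 4 > 0`. -/

theorem Matrix.two_mul_det_fin_two {R : Type*} [CommRing R] (A : Matrix (Fin 2) (Fin 2) R) :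
    2 * A.det = A.trace ^ 2 - (A * A).trace := by
  simp only [det_fin_two, trace_fin_two, mul_apply, Fin.sum_univ_two]
  ring

theorem Matrix.trace_sub_mul_sub {n R : Type*} [Fintype n] [CommRing R] (A B : Matrix n n R) :
    ((A - B) * (A - B)).trace = (A * A).trace + (B * B).trace - 2 * (A * B).trace := by
  simp only [sub_mul, mul_sub, trace_sub, trace_mul_comm B A]
  ring

theorem Matrix.trace_smul_sub_mul_smul_sub {n R : Type*} [Fintype n] [CommRing R] (c : R)
    (A B : Matrix n n R) :
    ((c • A - B) * (c • A - B)).trace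
      = c ^ 2 * (A * A).trace - 2 * c * (A * B).trace + (B * B).trace := by
  simp only [sub_mul, mul_sub, mul_smul_comm, smul_mul_assoc, trace_sub, trace_smul,
    smul_eq_mul, trace_mul_comm B A]
  ring

theorem Matrix.IsHermitian.ofReal_re_trace_mul {n : Type*} [Fintype n]
    {A B : Matrix n n ℂ} (hA : A.IsHermitian) (hB : B.IsHermitian) :
    (((A * B).trace.re : ℝ) : ℂ) = (A * B).trace := by
  refine Complex.conj_eq_iff_re.mp ?_
  rw [← Complex.star_def, ← trace_conjTranspose, conjTranspose_mul, hA.eq, hB.eq, trace_mul_comm]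

theorem Matrix.IsHermitian.trace_mul_self_re_pos {n : Type*} [Fintype n]
    {A : Matrix n n ℂ} (hA : A.IsHermitian) (h : A ≠ 0) : 0 < (A * A).trace.re := by
  have hpsd : (A * A).PosSemidef := by
    simpa only [hA.eq] using posSemidef_conjTranspose_mul_self A
  have hne : (A * A).trace ≠ 0 := by
    simpa only [hA.eq] using trace_conjTranspose_mul_self_eq_zero_iff.not.mpr h
  exact (Complex.pos_iff.mp (hpsd.trace_nonneg.lt_of_ne' hne)).1

theorem IsDensity.trace_mul_self_re_le_one {rho : Matrix (Fin 2) (Fin 2) ℂ}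
    (h : IsDensity rho) : (rho * rho).trace.re ≤ 1 := by
  have h2 : 2 * rho.det = 1 - (rho * rho).trace := by rw [two_mul_det_fin_two, h.2, one_pow]
  have hdet := (Complex.nonneg_iff.mp h.1.det_nonneg).1
  have h2re := congrArg Complex.re h2
  simp only [Complex.mul_re, Complex.re_ofNat, Complex.im_ofNat, zero_mul, sub_zero,
    Complex.sub_re, Complex.one_re] at h2re
  linarith

theorem sub_mul_add_sq_pos_of_le_one {a b c : ℝ} (ha : a ≤ 1) (hb : b ≤ 1)
    (ht : 0 < a + b - 2 * c) : 0 < a + b - 2 * c - a * b + c ^ 2 := by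
  nlinarith [sq_nonneg (a - b), mul_nonneg (sub_nonneg.mpr ha) (sub_nonneg.mpr hb)]

section omegaOp

variable {d : ℕ} {rho sigma : Matrix (Fin d) (Fin d) ℂ}

theorem omegaOp_eq_add_smul_sub (rho sigma : Matrix (Fin d) (Fin d) ℂ) :
    omegaOp rho sigma = sigma + muCoef rho sigma • (rho - sigma) := by
  rw [omegaOp, sub_smul, one_smul, smul_sub]
  abel

theorem muCoef_mul_trace_sub_mul_sub (hT : ((rho - sigma) * (rho - sigma)).trace ≠ 0) :
    muCoef rho sigma * ((rho - sigma) * (rho - sigma)).trace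
      = (sigma * sigma).trace - (rho * sigma).trace :=
  div_mul_cancel₀ _ hT

theorem trace_omegaOp (hrho : rho.trace = 1) (hsigma : sigma.trace = 1) :
    (omegaOp rho sigma).trace = 1 := by
  rw [omegaOp_eq_add_smul_sub, trace_add, trace_smul, trace_sub, hrho, hsigma, sub_self,
    smul_zero, add_zero]

theorem trace_omegaOp_mul_sub (hT : ((rho - sigma) * (rho - sigma)).trace ≠ 0) :
    (omegaOp rho sigma * (rho - sigma)).trace = 0 := by
  rw [omegaOp_eq_add_smul_sub, add_mul, trace_add, smul_mul_assoc, trace_smul, smul_eq_mul,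
    muCoef_mul_trace_sub_mul_sub hT, mul_sub, trace_sub, trace_mul_comm sigma rho]
  ring

theorem trace_sub_mul_sub_mul_trace_omegaOp_mul_self
    (hT : ((rho - sigma) * (rho - sigma)).trace ≠ 0) :
    ((rho - sigma) * (rho - sigma)).trace * (omegaOp rho sigma * omegaOp rho sigma).trace
      = (rho * rho).trace * (sigma * sigma).trace - (rho * sigma).trace ^ 2 := by
  have hsq : (omegaOp rho sigma * omegaOp rho sigma).trace
      = (sigma * sigma).trace
        + muCoef rho sigma * ((rho * sigma).trace - (sigma * sigma).trace) := by
    nth_rw 2 [omegaOp_eq_add_smul_sub]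
    rw [mul_add, mul_smul_comm, trace_add, trace_smul, trace_omegaOp_mul_sub hT, smul_zero,
      add_zero, omegaOp_eq_add_smul_sub, add_mul, smul_mul_assoc, trace_add, trace_smul,
      smul_eq_mul, sub_mul, trace_sub]
  have hmu := muCoef_mul_trace_sub_mul_sub hT
  rw [trace_sub_mul_sub] at hmu ⊢
  rw [hsq]
  linear_combination ((rho * sigma).trace - (sigma * sigma).trace) * hmu

end omegaOp

theorem trace_sub_mul_sub_mul_two_mul_det_Hmat {rho sigma : Matrix (Fin 2) (Fin 2) ℂ}
    (hrho : rho.trace = 1) (hsigma : sigma.trace = 1)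
    (hT : ((rho - sigma) * (rho - sigma)).trace ≠ 0) (lam : ℝ) :
    ((rho - sigma) * (rho - sigma)).trace * (2 * (Hmat rho sigma lam).det)
      = lam ^ 2 * (((rho - sigma) * (rho - sigma)).trace
          - (rho * rho).trace * (sigma * sigma).trace + (rho * sigma).trace ^ 2)
        - ((rho - sigma) * (rho - sigma)).trace ^ 2 := by
  have htrace : (Hmat rho sigma lam).trace = lam := by
    rw [Hmat, trace_sub, trace_smul, trace_omegaOp hrho hsigma, trace_sub, hrho, hsigma]
    simp
  have hsq : (Hmat rho sigma lam * Hmat rho sigma lam).trace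
      = lam ^ 2 * (omegaOp rho sigma * omegaOp rho sigma).trace
        + ((rho - sigma) * (rho - sigma)).trace := by
    rw [Hmat, trace_smul_sub_mul_smul_sub, trace_omegaOp_mul_sub hT, mul_zero, sub_zero]
  rw [two_mul_det_fin_two, htrace, hsq]
  linear_combination (-(lam : ℂ) ^ 2) * trace_sub_mul_sub_mul_trace_omegaOp_mul_self hT

theorem sq_mul_sub_sq_eq_zero_iff {d t x : ℝ} (hd : 0 < d) :
    x ^ 2 * d - t ^ 2 = 0 ↔ x = t / Real.sqrt d ∨ x = -(t / Real.sqrt d) := by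
  have hs := (Real.sqrt_pos.mpr hd).ne'
  have hsq : x ^ 2 * d = (x * Real.sqrt d) ^ 2 := by rw [mul_pow, Real.sq_sqrt hd.le]
  rw [sub_eq_zero, hsq, sq_eq_sq_iff_eq_or_eq_neg, ← neg_div, eq_div_iff hs, eq_div_iff hs]

theorem det_Hmat_zero_iff (rho sigma : Matrix (Fin 2) (Fin 2) ℂ)
    (hrho : IsDensity rho) (hsigma : IsDensity sigma) (hne : rho ≠ sigma) :
    0 < (((rho - sigma) * (rho - sigma)).trace).re
        - ((rho * rho).trace).re * ((sigma * sigma).trace).re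
        + (((rho * sigma).trace).re) ^ 2 ∧
    ∀ lam : ℝ,
      ((Hmat rho sigma lam).det = 0 ↔
        lam = (((rho - sigma) * (rho - sigma)).trace).re /
                Real.sqrt ((((rho - sigma) * (rho - sigma)).trace).re
                  - ((rho * rho).trace).re * ((sigma * sigma).trace).re
                  + (((rho * sigma).trace).re) ^ 2) ∨
        lam = -((((rho - sigma) * (rho - sigma)).trace).re /
                Real.sqrt ((((rho - sigma) * (rho - sigma)).trace).re
                  - ((rho * rho).trace).re * ((sigma * sigma).trace).re
                  + (((rho * sigma).trace).re) ^ 2))) := by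
  have hρ := hrho.1.1
  have hσ := hsigma.1.1
  set t := (((rho - sigma) * (rho - sigma)).trace).re
  set a := ((rho * rho).trace).re
  set b := ((sigma * sigma).trace).re
  set c := ((rho * sigma).trace).re
  have hT : (t : ℂ) = ((rho - sigma) * (rho - sigma)).trace :=
    (hρ.sub hσ).ofReal_re_trace_mul (hρ.sub hσ)
  have hA : (a : ℂ) = (rho * rho).trace := hρ.ofReal_re_trace_mul hρ
  have hB : (b : ℂ) = (sigma * sigma).trace := hσ.ofReal_re_trace_mul hσ
  have hC : (c : ℂ) = (rho * sigma).trace := hρ.ofReal_re_trace_mul hσ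
  have htpos : 0 < t := (hρ.sub hσ).trace_mul_self_re_pos (sub_ne_zero.mpr hne)
  have ht : t = a + b - 2 * c := by
    have hexpand := trace_sub_mul_sub rho sigma
    rw [← hT, ← hA, ← hB, ← hC] at hexpand
    exact_mod_cast hexpand
  have hD : 0 < t - a * b + c ^ 2 := ht ▸ sub_mul_add_sq_pos_of_le_one
    hrho.trace_mul_self_re_le_one hsigma.trace_mul_self_re_le_one (ht ▸ htpos)
  refine ⟨hD, fun lam => ?_⟩
  have hT0 : (t : ℂ) ≠ 0 := Complex.ofReal_ne_zero.mpr htpos.ne'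
  have hdet := trace_sub_mul_sub_mul_two_mul_det_Hmat hrho.2 hsigma.2 (hT ▸ hT0) lam
  rw [← hT, ← hA, ← hB, ← hC] at hdet
  rw [← sq_mul_sub_sq_eq_zero_iff hD, ← mul_right_inj' (mul_ne_zero hT0 two_ne_zero),
    mul_assoc, hdet, mul_zero]
  exact_mod_cast Iff.rfl
end
end

section
/- For real a with 0 ≤ a < 1 and λ ∈ [0, 1), the function Δ(a,λ) = I(a, a−λ+1, λ) − I(a, a+λ−1, λ) (case λ > a) satisfies Δ(0,λ) = 0 and ∂Δ/∂a = (1/2)·log((1−a²)/((2−λ)²−a²)) ≤ 0; hence Δ(a,λ) ≤ 0 for all a ≥ 0. -/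
noncomputable section

/-- `Δ(a,λ) = I(a, a−λ+1, λ) − I(a, a+λ−1, λ)` (case `λ > a`). -/
def Delta2 (a lam : ℝ) : ℝ := MI a (a - lam + 1) lam - MI a (a + lam - 1) lam


/-! With `h = negMulLog`, write `I = H(X) + H(Y) - H(X,Y)`. For `|t| < λ < 1` each of the two
distributions in `Δ(t, λ)` has one vanishing cell, and all but four entropy terms cancel:
`Δ(t, λ) = g(2 - λ, t) - g(1, t)` with `g(c, t) = h((c + t)/2) - h((c - t)/2)`.
Since `g(c, 0) = 0` and `∂ₜ g(c, t) = -log((c² - t²)/4)/2 - 1`, we get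
`∂ₜ Δ = ½ log((1 - t²)/((2 - λ)² - t²)) ≤ 0` because `2 - λ ≥ 1`; so `Δ(·, λ)` is antitone on
`[-1, 1]` and `Δ(a, λ) ≤ Δ(0, λ) = 0`. -/

open Real Set

theorem mul_log_div_mul_s19 (p : ℝ) {u v : ℝ} (hu : u ≠ 0) (hv : v ≠ 0) :
    p * log (p / (u * v)) = p * log p - p * log u - p * log v := by
  rcases eq_or_ne p 0 with rfl | hp
  · simp
  · rw [log_div hp (mul_ne_zero hu hv), log_mul hu hv]
    ring

theorem MI_eq_negMulLog (a b lam : ℝ) (ha : |a| < 1) (hb : |b| < 1) :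
    MI a b lam = negMulLog (pX0 a) + negMulLog (pX1 a) + negMulLog (pY0 b) + negMulLog (pY1 b)
      - (negMulLog (p00 a b lam) + negMulLog (p01 a b lam)
        + negMulLog (p10 a b lam) + negMulLog (p11 a b lam)) := by
  rw [abs_lt] at ha hb
  have hX0 : pX0 a ≠ 0 := by unfold pX0; linarith
  have hX1 : pX1 a ≠ 0 := by unfold pX1; linarith
  have hY0 : pY0 b ≠ 0 := by unfold pY0; linarith
  have hY1 : pY1 b ≠ 0 := by unfold pY1; linarith
  rw [MI, mul_log_div_mul_s19 _ hX0 hY0, mul_log_div_mul_s19 _ hX0 hY1, mul_log_div_mul_s19 _ hX1 hY0,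
    mul_log_div_mul_s19 _ hX1 hY1]
  simp only [negMulLog, p00, p01, p10, p11, pX0, pX1, pY0, pY1]
  ring

def oddNegMulLog (c t : ℝ) : ℝ := negMulLog ((c + t) / 2) - negMulLog ((c - t) / 2)

theorem Delta2_eq_oddNegMulLog_sub {t lam : ℝ} (hl : lam < 1) (ht : |t| < lam) :
    Delta2 t lam = oddNegMulLog (2 - lam) t - oddNegMulLog 1 t := by
  obtain ⟨ht₁, ht₂⟩ := abs_lt.mp ht
  have hX : |t| < 1 := abs_lt.mpr ⟨by linarith, by linarith⟩
  have hY₁ : |t - lam + 1| < 1 := abs_lt.mpr ⟨by linarith, by linarith⟩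
  have hY₂ : |t + lam - 1| < 1 := abs_lt.mpr ⟨by linarith, by linarith⟩
  rw [Delta2, MI_eq_negMulLog _ _ _ hX hY₁, MI_eq_negMulLog _ _ _ hX hY₂]
  simp only [oddNegMulLog, p00, p01, p10, p11, pX0, pX1, pY0, pY1]
  ring_nf

theorem hasDerivAt_oddNegMulLog {c t : ℝ} (ht : t ^ 2 ≠ c ^ 2) :
    HasDerivAt (oddNegMulLog c) (-log ((c ^ 2 - t ^ 2) / 4) / 2 - 1) t := by
  have hp : (c + t) / 2 ≠ 0 := fun h => ht (by linear_combination (t - c) * h * 2)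
  have hm : (c - t) / 2 ≠ 0 := fun h => ht (by linear_combination -(t + c) * h * 2)
  have dp := (hasDerivAt_negMulLog hp).comp t (((hasDerivAt_id t).const_add c).div_const 2)
  have dm := (hasDerivAt_negMulLog hm).comp t (((hasDerivAt_id t).const_sub c).div_const 2)
  refine (dp.sub dm).congr_deriv ?_
  rw [show (c ^ 2 - t ^ 2) / 4 = (c + t) / 2 * ((c - t) / 2) by ring, log_mul hp hm]
  ring

theorem hasDerivAt_oddNegMulLog_sub {c t : ℝ} (hc : 1 ≤ c) (ht : |t| < 1) :
    HasDerivAt (fun s => oddNegMulLog c s - oddNegMulLog 1 s)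
      (1 / 2 * log ((1 - t ^ 2) / (c ^ 2 - t ^ 2))) t := by
  have ht2 : t ^ 2 < 1 := by rw [sq_lt_one_iff_abs_lt_one]; exact ht
  have hc2 : 1 ≤ c ^ 2 := by nlinarith
  refine ((hasDerivAt_oddNegMulLog (c := c) (by linarith)).sub
    (hasDerivAt_oddNegMulLog (c := 1) (by linarith))).congr_deriv ?_
  rw [show (1 - t ^ 2) / (c ^ 2 - t ^ 2) = ((1 ^ 2 - t ^ 2) / 4) / ((c ^ 2 - t ^ 2) / 4) by
      field_simp,
    log_div (x := (1 ^ 2 - t ^ 2) / 4) (by linarith) (by linarith)]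
  ring

theorem log_div_sq_sub_sq_nonpos {c t : ℝ} (ht : t ^ 2 ≤ 1) (hc : 1 ≤ c ^ 2) :
    log ((1 - t ^ 2) / (c ^ 2 - t ^ 2)) ≤ 0 :=
  log_nonpos (div_nonneg (by linarith) (by linarith)) (div_le_one_of_le₀ (by linarith) (by linarith))

theorem antitoneOn_oddNegMulLog_sub {c : ℝ} (hc : 1 ≤ c) :
    AntitoneOn (fun s => oddNegMulLog c s - oddNegMulLog 1 s) (Icc (-1) 1) := by
  have hcont : Continuous fun s => oddNegMulLog c s - oddNegMulLog 1 s := by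
    unfold oddNegMulLog; fun_prop
  refine antitoneOn_of_hasDerivWithinAt_nonpos
    (f' := fun t => 1 / 2 * log ((1 - t ^ 2) / (c ^ 2 - t ^ 2)))
    (convex_Icc _ _) hcont.continuousOn (fun t ht => ?_) (fun t ht => ?_)
  all_goals rw [interior_Icc, mem_Ioo, ← abs_lt] at ht
  · exact (hasDerivAt_oddNegMulLog_sub hc ht).hasDerivWithinAt
  · exact mul_nonpos_of_nonneg_of_nonpos (by norm_num)
      (log_div_sq_sub_sq_nonpos ((sq_le_one_iff_abs_le_one t).mpr ht.le) (by nlinarith))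

theorem boundary_max_b_case_lam_gt_a_general (a lam : ℝ) (ha : 0 ≤ a)
    (hl' : lam < 1) (hal : a < lam) :
    Delta2 0 lam = 0 ∧
    deriv (fun t => Delta2 t lam) a
      = (1 / 2) * Real.log ((1 - a ^ 2) / ((2 - lam) ^ 2 - a ^ 2)) ∧
    deriv (fun t => Delta2 t lam) a ≤ 0 ∧
    Delta2 a lam ≤ 0 := by
  have hc : 1 ≤ 2 - lam := by linarith
  have hΔ : ∀ t ∈ Ioo (-lam) lam, Delta2 t lam = oddNegMulLog (2 - lam) t - oddNegMulLog 1 t :=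
    fun _ ht => Delta2_eq_oddNegMulLog_sub hl' (abs_lt.mpr ht)
  have hzero : Delta2 0 lam = 0 := by
    simp [hΔ 0 ⟨by linarith, by linarith⟩, oddNegMulLog]
  have hderiv : deriv (fun t => Delta2 t lam) a
      = 1 / 2 * log ((1 - a ^ 2) / ((2 - lam) ^ 2 - a ^ 2)) := by
    rw [Filter.EventuallyEq.deriv_eq (Filter.eventually_of_mem (Ioo_mem_nhds (by linarith) hal) hΔ)]
    exact (hasDerivAt_oddNegMulLog_sub hc (abs_lt.mpr ⟨by linarith, by linarith⟩)).deriv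
  refine ⟨hzero, hderiv, ?_, ?_⟩
  · rw [hderiv]
    exact mul_nonpos_of_nonneg_of_nonpos (by norm_num)
      (log_div_sq_sub_sq_nonpos (by nlinarith) (by nlinarith))
  · rw [← hzero, hΔ a ⟨by linarith, hal⟩, hΔ 0 ⟨by linarith, by linarith⟩]
    exact antitoneOn_oddNegMulLog_sub hc ⟨by linarith, by linarith⟩ ⟨by linarith, by linarith⟩ ha

theorem boundary_max_b_case_lam_gt_a (a lam : ℝ) (ha : 0 ≤ a) (ha' : a < 1)
    (hl : 0 ≤ lam) (hl' : lam < 1) (hal : a < lam) :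
    Delta2 0 lam = 0 ∧
    deriv (fun t => Delta2 t lam) a
      = (1 / 2) * Real.log ((1 - a ^ 2) / ((2 - lam) ^ 2 - a ^ 2)) ∧
    deriv (fun t => Delta2 t lam) a ≤ 0 ∧
    Delta2 a lam ≤ 0 :=
  boundary_max_b_case_lam_gt_a_general a lam ha hl' hal
end
end
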